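/- Suppose for each s = 1,…,S the residual precisions τ_s are known. Then the exact Bayes Factor under the ES model factorizes as BF^ES(φ,ω) = ABF_single(𝒯²_ES, ζ; ω)·∏_s ABF_single(T_s², δ_s; φ), where T_s² = β̂_s² τ_s/δ_s², i.e. the approximation of Proposition 1 is exact when the error variances are known. -/

import Mathlib

open Real MeasureTheory Finset

noncomputable def gpdf (m v x : ℝ) : ℝ :=
  (Real.sqrt (2 * Real.pi * v))⁻¹ * Real.exp (-(x - m) ^ 2 / (2 * v))

noncomputable def lik {n : ℕ} (y g : Fin n → ℝ) (tau mu beta : ℝ) : ℝ :=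
  ∏ i, Real.sqrt (tau / (2 * Real.pi)) * Real.exp (-(tau / 2) * (y i - mu - beta * g i) ^ 2)

noncomputable def ABFsingle (T2 delta phi : ℝ) : ℝ :=
  Real.sqrt (delta ^ 2 / (delta ^ 2 + phi ^ 2)) *
    Real.exp (T2 / 2 * (phi ^ 2 / (delta ^ 2 + phi ^ 2)))

/-!
Integrating out the flat intercept `μ` leaves a likelihood in `β` that depends on the data only
through centred sums; divided by its value at `β = 0` it is `exp (τ S_yg β - τ S_gg β² / 2)`.
In the standardised scale `b = β √τ` this is a Gaussian likelihood ratio with variance `δ²` and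
estimate `b̂`, and integrating it against the `N(b̄, φ²)` prior gives exactly
`ABF_single(T², δ; φ)` times `exp (w b̂ b̄ - w b̄² / 2)`, `w = (δ² + φ²)⁻¹`. The product of
these factors over the subgroups has the same shape with total weight `∑ w_s = ζ⁻²`, and
integrating it against the `N(0, ω²)` prior on `b̄` gives `ABF_single(𝒯²_ES, ζ; ω)`.
-/

lemma integral_exp_neg_quadratic {a : ℝ} (ha : 0 < a) (b c : ℝ) :
    ∫ x, exp (-(a * x ^ 2 + b * x + c)) = √(π / a) * exp (b ^ 2 / (4 * a) - c) := by
  have h_complete_square : ∀ x, -(a * x ^ 2 + b * x + c)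
      = -a * (x + b / (2 * a)) ^ 2 + (b ^ 2 / (4 * a) - c) := fun x => by
    field_simp; ring
  simp_rw [h_complete_square, exp_add, integral_mul_const,
    integral_add_right_eq_self (fun x => exp (-a * x ^ 2)), integral_gaussian]

/-- With known variance the approximate Bayes factor is exact: here `B / P` is the estimate and
`P⁻¹` its variance. -/
lemma integral_gpdf_mul_exp {φ P : ℝ} (hφ : φ ≠ 0) (hP : 0 < P) (m B : ℝ) :
    ∫ x, gpdf m (φ ^ 2) x * exp (B * x - P / 2 * x ^ 2)
      = ABFsingle (B ^ 2 / P) √P⁻¹ φ *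
        exp ((P⁻¹ + φ ^ 2)⁻¹ * (B / P) * m - (P⁻¹ + φ ^ 2)⁻¹ / 2 * m ^ 2) := by
  have hv : 0 < φ ^ 2 := by positivity
  have hA : 0 < P / 2 + 1 / (2 * φ ^ 2) := by positivity
  have h_exp : ∀ x, gpdf m (φ ^ 2) x * exp (B * x - P / 2 * x ^ 2)
      = (√(2 * π * φ ^ 2))⁻¹ * exp (-((P / 2 + 1 / (2 * φ ^ 2)) * x ^ 2
          + -(B + m / φ ^ 2) * x + m ^ 2 / (2 * φ ^ 2))) := fun x => by
    rw [gpdf, mul_assoc, ← exp_add]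
    congr 2
    field_simp
    ring
  simp_rw [h_exp]
  rw [integral_const_mul, integral_exp_neg_quadratic hA, ABFsingle, sq_sqrt (by positivity),
    mul_assoc √(P⁻¹ / (P⁻¹ + φ ^ 2)), ← exp_add, ← mul_assoc]
  congr 1
  · rw [← sqrt_inv, ← sqrt_mul (by positivity)]
    congr 1
    field_simp
    ring
  · congr 1
    field_simp
    ring

lemma gpdf_div {c : ℝ} (hc : 0 < c) (m v x : ℝ) :
    gpdf (m / c) (v / c ^ 2) (x / c) = c * gpdf m v x := by
  have h_sqrt : √(2 * π * (v / c ^ 2)) = √(2 * π * v) / c := by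
    rw [mul_div_assoc', sqrt_div' _ (by positivity), sqrt_sq hc.le]
  have h_exponent : (x / c - m / c) ^ 2 / (2 * (v / c ^ 2)) = (x - m) ^ 2 / (2 * v) := by
    field_simp
  rw [gpdf, gpdf, h_sqrt, neg_div, h_exponent, inv_div, neg_div]
  ring

lemma integral_gpdf_div_mul {c : ℝ} (hc : 0 < c) (m v : ℝ) (f : ℝ → ℝ) :
    ∫ x, gpdf (m / c) (v / c ^ 2) x * f x = ∫ x, gpdf m v x * f (x / c) := by
  have h := Measure.integral_comp_div (fun x => gpdf (m / c) (v / c ^ 2) x * f x) c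
  simp only [gpdf_div hc, mul_assoc, integral_const_mul, abs_of_pos hc, smul_eq_mul] at h
  exact (mul_left_cancel₀ hc.ne' h).symm

noncomputable def centeredInner {n : ℕ} (x z : Fin n → ℝ) : ℝ :=
  ∑ i, x i * z i - (∑ i, x i) * (∑ i, z i) / n

lemma centeredInner_eq_sum_mul_sub_mean {n : ℕ} (x z : Fin n → ℝ) :
    centeredInner x z = ∑ i, x i * z i - n * ((∑ i, x i) / n) * ((∑ i, z i) / n) := by
  rcases eq_or_ne (n : ℝ) 0 with hn | hn
  · simp [centeredInner, hn]
  · rw [centeredInner]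
    field_simp

lemma pos_of_centeredInner_self_pos {n : ℕ} {x : Fin n → ℝ} (h : 0 < centeredInner x x) :
    0 < n := by
  rcases n with _ | n
  · simp [centeredInner] at h
  · exact n.succ_pos

lemma centeredInner_sub_smul_self {n : ℕ} (y g : Fin n → ℝ) (β : ℝ) :
    centeredInner (fun i => y i - β * g i) (fun i => y i - β * g i)
      = centeredInner y y - 2 * β * centeredInner y g + β ^ 2 * centeredInner g g := by
  have h_sq : ∀ i, (y i - β * g i) * (y i - β * g i)
      = y i * y i - 2 * β * (y i * g i) + β ^ 2 * (g i * g i) := fun i => by ring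
  simp only [centeredInner, h_sq, Finset.sum_add_distrib, Finset.sum_sub_distrib, ← Finset.mul_sum]
  ring

lemma lik_eq_exp_sum {n : ℕ} (y g : Fin n → ℝ) (τ μ β : ℝ) :
    lik y g τ μ β = √(τ / (2 * π)) ^ n * exp (-(τ / 2) * ∑ i, (y i - β * g i - μ) ^ 2) := by
  rw [lik, Finset.prod_mul_distrib, Finset.prod_const, Finset.card_univ, Fintype.card_fin,
    ← exp_sum, Finset.mul_sum]
  congr 2
  exact Finset.sum_congr rfl fun i _ => by ring

lemma integral_exp_neg_sum_sq_sub {n : ℕ} (hn : 0 < n) {t : ℝ} (ht : 0 < t) (r : Fin n → ℝ) :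
    ∫ μ, exp (-(t / 2) * ∑ i, (r i - μ) ^ 2)
      = √(2 * π / (n * t)) * exp (-(t / 2) * centeredInner r r) := by
  have hn' : (0 : ℝ) < n := Nat.cast_pos.2 hn
  have h_quadratic : ∀ μ, -(t / 2) * ∑ i, (r i - μ) ^ 2
      = -((n * t / 2) * μ ^ 2 + (-(t * ∑ i, r i)) * μ + t / 2 * ∑ i, r i * r i) := fun μ => by
    have h_term : ∀ i, (r i - μ) ^ 2 = r i * r i - 2 * μ * r i + μ ^ 2 := fun i => by ring
    simp only [h_term, Finset.sum_add_distrib, Finset.sum_sub_distrib, ← Finset.mul_sum,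
      Finset.sum_const, Finset.card_univ, Fintype.card_fin, nsmul_eq_mul]
    ring
  simp_rw [h_quadratic]
  rw [integral_exp_neg_quadratic (by positivity), centeredInner]
  congr 2
  · field_simp
  · field_simp
    ring

lemma integral_lik {n : ℕ} (hn : 0 < n) {τ : ℝ} (hτ : 0 < τ) (y g : Fin n → ℝ) (β : ℝ) :
    ∫ μ, lik y g τ μ β = √(τ / (2 * π)) ^ n * √(2 * π / (n * τ)) *
      exp (-(τ / 2) * centeredInner (fun i => y i - β * g i) (fun i => y i - β * g i)) := by
  simp_rw [lik_eq_exp_sum]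
  rw [integral_const_mul, integral_exp_neg_sum_sq_sub hn hτ, mul_assoc]

lemma integral_lik_pos {n : ℕ} (hn : 0 < n) {τ : ℝ} (hτ : 0 < τ) (y g : Fin n → ℝ) (β : ℝ) :
    0 < ∫ μ, lik y g τ μ β := by
  have hn' : (0 : ℝ) < n := Nat.cast_pos.2 hn
  rw [integral_lik hn hτ]
  positivity

lemma integral_lik_eq_mul_exp {n : ℕ} (hn : 0 < n) {τ : ℝ} (hτ : 0 < τ) (y g : Fin n → ℝ)
    (β : ℝ) :
    ∫ μ, lik y g τ μ β = (∫ μ, lik y g τ μ 0) *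
      exp (τ * centeredInner y g * β - τ * centeredInner g g / 2 * β ^ 2) := by
  rw [integral_lik hn hτ, integral_lik hn hτ, centeredInner_sub_smul_self,
    centeredInner_sub_smul_self, mul_assoc _ (exp _), ← exp_add]
  congr 2
  ring

lemma integral_gpdf_mul_integral_lik {n : ℕ} {τ φ : ℝ} (hτ : 0 < τ) (hφ : φ ≠ 0)
    {y g : Fin n → ℝ} (hX : 0 < centeredInner g g) {d2 bet : ℝ}
    (hd : d2 = (centeredInner g g)⁻¹) (hbet : bet = centeredInner y g * d2) (bbar : ℝ) :
    ∫ β, gpdf (bbar / √τ) (φ ^ 2 / τ) β * ∫ μ, lik y g τ μ β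
      = (∫ μ, lik y g τ μ 0) * ABFsingle (bet ^ 2 * τ / d2) √d2 φ *
          exp ((d2 + φ ^ 2)⁻¹ * (bet * √τ) * bbar - (d2 + φ ^ 2)⁻¹ / 2 * bbar ^ 2) := by
  set X := centeredInner g g
  set U := centeredInner y g
  have hsqrt : 0 < √τ := sqrt_pos.2 hτ
  have h_var : φ ^ 2 / τ = φ ^ 2 / √τ ^ 2 := by rw [sq_sqrt hτ.le]
  have h_std : ∀ b, τ * U * (b / √τ) - τ * X / 2 * (b / √τ) ^ 2 = √τ * U * b - X / 2 * b ^ 2 :=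
    fun b => by
      field_simp
      rw [sq_sqrt hτ.le]
      ring
  have h_T2 : (√τ * U) ^ 2 / X = bet ^ 2 * τ / d2 := by
    rw [hbet, hd, mul_pow, sq_sqrt hτ.le]
    field_simp
  have h_bhat : √τ * U / X = bet * √τ := by
    rw [hbet, hd]
    ring
  have h_pull : ∀ β, gpdf (bbar / √τ) (φ ^ 2 / τ) β * ∫ μ, lik y g τ μ β
      = (∫ μ, lik y g τ μ 0) *
        (gpdf (bbar / √τ) (φ ^ 2 / τ) β * exp (τ * U * β - τ * X / 2 * β ^ 2)) := fun β => by
    rw [integral_lik_eq_mul_exp (pos_of_centeredInner_self_pos hX) hτ]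
    ring
  simp only [h_pull]
  rw [integral_const_mul, h_var, integral_gpdf_div_mul hsqrt]
  simp_rw [h_std]
  rw [integral_gpdf_mul_exp hφ hX, h_T2, h_bhat, ← hd]
  ring

lemma integral_mul_prod_const_mul_exp {ι : Type*} (s : Finset ι) (p : ℝ → ℝ) (c a b : ι → ℝ) :
    ∫ x, p x * ∏ i ∈ s, c i * exp (a i * x - b i / 2 * x ^ 2)
      = (∏ i ∈ s, c i) * ∫ x, p x * exp ((∑ i ∈ s, a i) * x - (∑ i ∈ s, b i) / 2 * x ^ 2) := by
  simp_rw [Finset.prod_mul_distrib, ← exp_sum, Finset.sum_sub_distrib, ← Finset.sum_mul,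
    ← Finset.sum_div, mul_left_comm (p _), integral_const_mul]

lemma integral_gpdf_zero_mul_exp {ω W : ℝ} (hω : ω ≠ 0) (hW : 0 < W) (B : ℝ) :
    ∫ x, gpdf 0 (ω ^ 2) x * exp (B * x - W / 2 * x ^ 2)
      = ABFsingle ((B / W) ^ 2 / W⁻¹) √W⁻¹ ω := by
  rw [integral_gpdf_mul_exp hω hW, mul_zero, zero_pow two_ne_zero, mul_zero, sub_zero, exp_zero,
    mul_one, div_inv_eq_mul]
  congr 1
  field_simp

/-- When the residual precisions `τ_s` are known, the exact Bayes Factor of the ES model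
(with priors `b_s = β_s√τ_s ~ N(b̄, φ²)`, `b̄ ~ N(0, ω²)`, flat priors on the `μ_s`)
factorizes exactly as `ABF_single(𝒯²_ES, ζ; ω) · ∏_s ABF_single(T_s², δ_s; φ)`
with `T_s² = β̂_s² τ_s / δ_s²`: Proposition 1 is exact for known error variances. -/
theorem exact_bf_known_precisions_factorizes
    (S : ℕ) (hS : 1 ≤ S) (n : Fin S → ℕ)
    (y g : (s : Fin S) → Fin (n s) → ℝ)
    (tau : Fin S → ℝ) (htau : ∀ s, 0 < tau s)
    (phi omega : ℝ) (hphi : 0 < phi) (homega : 0 < omega)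
    -- summary statistics
    (gbar ybar delta2 betahat bhat w Ts2 : Fin S → ℝ)
    (hgbar : ∀ s, gbar s = (∑ i, g s i) / (n s))
    (hybar : ∀ s, ybar s = (∑ i, y s i) / (n s))
    (hdelta2 : ∀ s, delta2 s = ((∑ i, (g s i) ^ 2) - (n s) * (gbar s) ^ 2)⁻¹)
    (hgvar : ∀ s, 0 < (∑ i, (g s i) ^ 2) - (n s) * (gbar s) ^ 2)
    (hbetahat : ∀ s, betahat s = ((∑ i, y s i * g s i) - (n s) * ybar s * gbar s) * delta2 s)
    (hbhat : ∀ s, bhat s = betahat s * Real.sqrt (tau s))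
    (hw : ∀ s, w s = (delta2 s + phi ^ 2)⁻¹)
    (hTs2 : ∀ s, Ts2 s = (betahat s) ^ 2 * tau s / delta2 s)
    (zeta2 bbarhat T2ES : ℝ)
    (hzeta2 : zeta2 = (∑ s, w s)⁻¹)
    (hbbarhat : bbarhat = (∑ s, w s * bhat s) / (∑ s, w s))
    (hT2ES : T2ES = bbarhat ^ 2 / zeta2)
    -- marginal likelihoods (flat improper prior on each μ_s, known precisions)
    (Ma M0 : ℝ)
    (hMa : Ma = ∫ bbar, gpdf 0 (omega ^ 2) bbar *
      ∏ s, ∫ beta, gpdf (bbar / Real.sqrt (tau s)) (phi ^ 2 / tau s) beta *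
        ∫ mu, lik (y s) (g s) (tau s) mu beta)
    (hM0 : M0 = ∏ s, ∫ mu, lik (y s) (g s) (tau s) mu 0) :
    Ma / M0 =
      ABFsingle T2ES (Real.sqrt zeta2) omega *
        ∏ s, ABFsingle (Ts2 s) (Real.sqrt (delta2 s)) phi := by
  have h_Sgg : ∀ s, centeredInner (g s) (g s) = ∑ i, g s i ^ 2 - n s * gbar s ^ 2 := fun s => by
    rw [centeredInner_eq_sum_mul_sub_mean, ← hgbar]
    simp only [sq]
    ring
  have h_Syg : ∀ s, centeredInner (y s) (g s) = ∑ i, y s i * g s i - n s * ybar s * gbar s :=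
    fun s => by rw [centeredInner_eq_sum_mul_sub_mean, ← hybar, ← hgbar]
  have h_Sgg_pos : ∀ s, 0 < centeredInner (g s) (g s) := fun s => h_Sgg s ▸ hgvar s
  have h_subgroup : ∀ s bbar,
      ∫ β, gpdf (bbar / √(tau s)) (phi ^ 2 / tau s) β * ∫ μ, lik (y s) (g s) (tau s) μ β
        = (∫ μ, lik (y s) (g s) (tau s) μ 0) * ABFsingle (Ts2 s) √(delta2 s) phi *
            exp (w s * bhat s * bbar - w s / 2 * bbar ^ 2) := fun s bbar => by
    rw [hTs2, hw, hbhat]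
    exact integral_gpdf_mul_integral_lik (htau s) hphi.ne' (h_Sgg_pos s)
      (by rw [hdelta2, h_Sgg]) (by rw [hbetahat, h_Syg]) bbar
  have hM0_pos : 0 < M0 := hM0 ▸ Finset.prod_pos fun s _ =>
    integral_lik_pos (pos_of_centeredInner_self_pos (h_Sgg_pos s)) (htau s) _ _ _
  have hW_pos : 0 < ∑ s, w s := Finset.sum_pos (fun s _ => by
    have := inv_pos.2 (h_Sgg_pos s)
    rw [hw, hdelta2, ← h_Sgg]
    positivity) ⟨⟨0, hS⟩, Finset.mem_univ _⟩
  rw [div_eq_iff hM0_pos.ne', hMa]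
  simp_rw [h_subgroup]
  rw [integral_mul_prod_const_mul_exp, integral_gpdf_zero_mul_exp homega.ne' hW_pos,
    Finset.prod_mul_distrib, ← hM0, hT2ES, hbbarhat, hzeta2]
  ring
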